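/- arXiv:1509.08362 — 3 statements merged into one kernel-verified Lean document; each statement's English description precedes it below -/
import Mathlib

section
/- Let 𝒥 = (J_1,…,J_m) be an arbitrary cover of I = {1,…,n} and for each k let W^{J_k} be a real n×n matrix with the Gibbs block structure for J_k. Assume condition (A1) with constant λ ∈ [0,1). Set 𝒲 = W^{J_m}·W^{J_{m−1}}⋯W^{J_1}. Then for every integer k ≥ 1, ‖𝒲^k‖_∞ ≤ λ^{k−1}·‖𝒲‖_∞. -/
open Finset

/-- The boundary `∂J` of a block `J ⊆ I`: indices outside `J` adjacent to `J`. -/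
def bdry {n : ℕ} (J : Finset (Fin n)) : Finset (Fin n) :=
  Finset.univ.filter fun t => t ∉ J ∧ ∃ s ∈ J, ((s : ℕ) = (t : ℕ) + 1 ∨ (t : ℕ) = (s : ℕ) + 1)

/-- `W` has the Gibbs block structure for block `J`: entries in `[0,1]`, rows outside `J`
are identity rows, and rows in `J` vanish outside `∂J`. -/
def GibbsBlock {n : ℕ} (J : Finset (Fin n)) (W : Matrix (Fin n) (Fin n) ℝ) : Prop :=
  (∀ i j, 0 ≤ W i j ∧ W i j ≤ 1) ∧
  (∀ i, i ∉ J → ∀ j, W i j = if i = j then 1 else 0) ∧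
  (∀ i ∈ J, ∀ j, j ∉ bdry J → W i j = 0)

/-- Maximum absolute row sum norm `‖A‖_∞`. -/
noncomputable def rowNorm {n : ℕ} (A : Matrix (Fin n) (Fin n) ℝ) : ℝ :=
  ⨆ i, ∑ j, |A i j|

/-- The list `[m, m-1, …, 1]`. -/
def descList (m : ℕ) : List ℕ := (List.range m).map fun i => m - i

lemma descList_succ (m : ℕ) : descList (m + 1) = (m + 1) :: descList m := by
  simp [descList, List.range_succ_eq_map, List.map_map, Function.comp_def, Nat.succ_sub_succ]

lemma rowSum_mul {n : ℕ} (A B : Matrix (Fin n) (Fin n) ℝ) (i : Fin n) :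
    ∑ j, (A * B) i j = ∑ l, A i l * ∑ j, B l j := by
  simp only [Matrix.mul_apply, Finset.mul_sum]
  exact Finset.sum_comm

theorem stmt0 {n m : ℕ} (hn : 1 ≤ n) (hm : 1 ≤ m)
    (J : ℕ → Finset (Fin n)) (W : ℕ → Matrix (Fin n) (Fin n) ℝ)
    (hcover : ∀ i : Fin n, ∃ k ∈ Finset.Icc 1 m, i ∈ J k)
    (hblock : ∀ k ∈ Finset.Icc 1 m, GibbsBlock (J k) (W k))
    (lam : ℝ) (hlam0 : 0 ≤ lam) (hlam1 : lam < 1)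
    (hA1 : ∀ k ∈ Finset.Icc 1 m, ∀ i ∈ J k,
      i ∈ (Finset.Icc 1 m).biUnion (fun l => bdry (J l)) →
      ∑ j ∈ bdry (J k), W k i j ≤ lam)
    (k : ℕ) (hk : 1 ≤ k) :
    rowNorm ((((descList m).map W).prod) ^ k) ≤
      lam ^ (k - 1) * rowNorm (((descList m).map W).prod) := by
  classical
  set D : Finset (Fin n) := (Finset.Icc 1 m).biUnion (fun l => bdry (J l)) with hDdef
  set Q : ℕ → Matrix (Fin n) (Fin n) ℝ := fun m' => (((descList m').map W).prod) with hQdef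
  have hQsucc : ∀ m', Q (m' + 1) = W (m' + 1) * Q m' := by
    intro m'
    simp only [hQdef, descList_succ, List.map_cons, List.prod_cons]
  have hlam1' : lam ≤ 1 := le_of_lt hlam1
  -- main structural induction over the sweep
  have main : ∀ m', m' ≤ m →
      (∀ i j, 0 ≤ Q m' i j) ∧
      (∀ i j, Q m' i j ≠ 0 → j ∈ D ∨ (j = i ∧ ∀ k ∈ Finset.Icc 1 m', i ∉ J k)) ∧
      (∀ i ∈ D, ∑ j, Q m' i j ≤ 1) ∧
      (∀ i ∈ D, (∃ k ∈ Finset.Icc 1 m', i ∈ J k) → ∑ j, Q m' i j ≤ lam) := by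
    intro m'
    induction m' with
    | zero =>
      intro _
      have hQ0 : Q 0 = 1 := by simp [hQdef, descList]
      refine ⟨?_, ?_, ?_, ?_⟩
      · intro i j; rw [hQ0]; by_cases h : i = j <;> simp [Matrix.one_apply, h]
      · intro i j hij
        right
        rw [hQ0] at hij
        by_cases h : i = j
        · exact ⟨h.symm, by simp⟩
        · exact absurd (Matrix.one_apply_ne h) hij
      · intro i _; rw [hQ0]; simp [Matrix.one_apply]
      · intro i _ ⟨k, hk, _⟩; simp at hk
    | succ m' ih =>
      intro hle
      have hle' : m' ≤ m := le_of_lt (Nat.lt_of_succ_le hle)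
      obtain ⟨nn, supp, rs1, rslam⟩ := ih hle'
      have hmem : m' + 1 ∈ Finset.Icc 1 m :=
        Finset.mem_Icc.mpr ⟨Nat.succ_le_succ (Nat.zero_le _), hle⟩
      obtain ⟨hent, hid, hsupp⟩ := hblock (m' + 1) hmem
      have hbdrysub : bdry (J (m' + 1)) ⊆ D := by
        intro l hl
        exact Finset.mem_biUnion.mpr ⟨m' + 1, hmem, hl⟩
      -- identity-row case: entries unchanged
      have hIdrow : ∀ i, i ∉ J (m' + 1) → ∀ j, Q (m' + 1) i j = Q m' i j := by
        intro i hi j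
        rw [hQsucc, Matrix.mul_apply]
        rw [Finset.sum_eq_single i]
        · rw [hid i hi i]; simp
        · intro l _ hl; rw [hid i hi l, if_neg (fun h => hl h.symm), zero_mul]
        · intro h; exact absurd (Finset.mem_univ i) h
      -- row-sum bound for rows inside the block
      have hInrow : ∀ i, i ∈ J (m' + 1) → i ∈ D → ∑ j, Q (m' + 1) i j ≤ lam := by
        intro i hi hiD
        rw [hQsucc, rowSum_mul]
        have step1 : ∑ l, W (m' + 1) i l * ∑ j, Q m' l j ≤ ∑ l, W (m' + 1) i l := by
          apply Finset.sum_le_sum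
          intro l _
          by_cases h0 : W (m' + 1) i l = 0
          · simp [h0]
          · have hlb : l ∈ bdry (J (m' + 1)) := by
              by_contra hc; exact h0 (hsupp i hi l hc)
            have := rs1 l (hbdrysub hlb)
            calc W (m' + 1) i l * ∑ j, Q m' l j ≤ W (m' + 1) i l * 1 :=
                  mul_le_mul_of_nonneg_left this (hent i l).1
              _ = W (m' + 1) i l := mul_one _
        have step2 : ∑ l, W (m' + 1) i l = ∑ l ∈ bdry (J (m' + 1)), W (m' + 1) i l := by
          symm
          apply Finset.sum_subset (Finset.subset_univ _)
          intro l _ hl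
          exact hsupp i hi l hl
        calc ∑ l, W (m' + 1) i l * ∑ j, Q m' l j ≤ ∑ l, W (m' + 1) i l := step1
          _ = ∑ l ∈ bdry (J (m' + 1)), W (m' + 1) i l := step2
          _ ≤ lam := hA1 (m' + 1) hmem i hi hiD
      refine ⟨?_, ?_, ?_, ?_⟩
      · -- nonnegativity
        intro i j
        rw [hQsucc, Matrix.mul_apply]
        apply Finset.sum_nonneg
        intro l _
        exact mul_nonneg (hent i l).1 (nn l j)
      · -- support
        intro i j hij
        rw [hQsucc, Matrix.mul_apply] at hij
        obtain ⟨l, -, hl⟩ := Finset.exists_ne_zero_of_sum_ne_zero hij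
        have hWl : W (m' + 1) i l ≠ 0 := fun h => hl (by rw [h, zero_mul])
        have hAl : Q m' l j ≠ 0 := fun h => hl (by rw [h, mul_zero])
        by_cases hi : i ∈ J (m' + 1)
        · left
          have hlb : l ∈ bdry (J (m' + 1)) := by
            by_contra hc; exact hWl (hsupp i hi l hc)
          have hlD : l ∈ D := hbdrysub hlb
          rcases supp l j hAl with h | ⟨h, -⟩
          · exact h
          · rw [h]; exact hlD
        · have hli : l = i := by
            by_contra hne
            exact hWl (by rw [hid i hi l, if_neg (fun h => hne h.symm)])
          subst hli
          rcases supp l j hAl with h | ⟨h1, h2⟩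
          · exact Or.inl h
          · refine Or.inr ⟨h1, ?_⟩
            intro k hk
            rcases Nat.eq_or_lt_of_le (Finset.mem_Icc.mp hk).2 with h | h
            · rw [h]; exact hi
            · exact h2 k (Finset.mem_Icc.mpr ⟨(Finset.mem_Icc.mp hk).1, Nat.lt_succ_iff.mp h⟩)
      · -- row sums ≤ 1 on D
        intro i hiD
        by_cases hi : i ∈ J (m' + 1)
        · exact le_trans (hInrow i hi hiD) hlam1'
        · calc ∑ j, Q (m' + 1) i j = ∑ j, Q m' i j := by
                apply Finset.sum_congr rfl; intro j _; exact hIdrow i hi j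
            _ ≤ 1 := rs1 i hiD
      · -- row sums ≤ lam on D when i is covered
        intro i hiD ⟨k, hk, hik⟩
        by_cases hi : i ∈ J (m' + 1)
        · exact hInrow i hi hiD
        · have hk' : k ∈ Finset.Icc 1 m' := by
            rcases Nat.eq_or_lt_of_le (Finset.mem_Icc.mp hk).2 with h | h
            · exact absurd (h ▸ hik) hi
            · exact Finset.mem_Icc.mpr ⟨(Finset.mem_Icc.mp hk).1, Nat.lt_succ_iff.mp h⟩
          calc ∑ j, Q (m' + 1) i j = ∑ j, Q m' i j := by
                apply Finset.sum_congr rfl; intro j _; exact hIdrow i hi j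
            _ ≤ lam := rslam i hiD ⟨k, hk', hik⟩
  obtain ⟨Wnn, Wsupp', -, Wrslam'⟩ := main m le_rfl
  set 𝒲 : Matrix (Fin n) (Fin n) ℝ := Q m with h𝒲
  have Wsupp : ∀ i j, 𝒲 i j ≠ 0 → j ∈ D := by
    intro i j h
    rcases Wsupp' i j h with h | ⟨-, h2⟩
    · exact h
    · obtain ⟨k, hk, hik⟩ := hcover i
      exact absurd hik (h2 k hk)
  have Wrslam : ∀ i ∈ D, ∑ j, 𝒲 i j ≤ lam := fun i hi => Wrslam' i hi (hcover i)
  -- nonnegativity of powers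
  have pownn : ∀ r : ℕ, ∀ i j, 0 ≤ (𝒲 ^ r) i j := by
    intro r
    induction r with
    | zero => intro i j; by_cases h : i = j <;> simp [Matrix.one_apply, h]
    | succ r ihr =>
      intro i j
      rw [pow_succ', Matrix.mul_apply]
      exact Finset.sum_nonneg fun l _ => mul_nonneg (Wnn i l) (ihr l j)
  -- row sums of powers on D
  have powD : ∀ r : ℕ, ∀ i ∈ D, ∑ j, (𝒲 ^ r) i j ≤ lam ^ r := by
    intro r
    induction r with
    | zero => intro i _; simp [Matrix.one_apply]
    | succ r ihr =>
      intro i hiD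
      rw [pow_succ', rowSum_mul]
      have step1 : ∑ l, 𝒲 i l * ∑ j, (𝒲 ^ r) l j ≤ ∑ l, 𝒲 i l * lam ^ r := by
        apply Finset.sum_le_sum
        intro l _
        by_cases h0 : 𝒲 i l = 0
        · simp [h0]
        · exact mul_le_mul_of_nonneg_left (ihr l (Wsupp i l h0)) (Wnn i l)
      calc ∑ l, 𝒲 i l * ∑ j, (𝒲 ^ r) l j ≤ ∑ l, 𝒲 i l * lam ^ r := step1
        _ = (∑ l, 𝒲 i l) * lam ^ r := by rw [Finset.sum_mul]
        _ ≤ lam * lam ^ r :=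
            mul_le_mul_of_nonneg_right (Wrslam i hiD) (pow_nonneg hlam0 r)
        _ = lam ^ (r + 1) := (pow_succ' lam r).symm
  -- row sums of the k-th power against the first sweep
  obtain ⟨k', rfl⟩ : ∃ k', k = k' + 1 := ⟨k - 1, (Nat.succ_pred_eq_of_pos hk).symm⟩
  have rowbound : ∀ i, ∑ j, (𝒲 ^ (k' + 1)) i j ≤ lam ^ k' * ∑ j, 𝒲 i j := by
    intro i
    rw [pow_succ', rowSum_mul]
    have step1 : ∑ l, 𝒲 i l * ∑ j, (𝒲 ^ k') l j ≤ ∑ l, 𝒲 i l * lam ^ k' := by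
      apply Finset.sum_le_sum
      intro l _
      by_cases h0 : 𝒲 i l = 0
      · simp [h0]
      · exact mul_le_mul_of_nonneg_left (powD k' l (Wsupp i l h0)) (Wnn i l)
    calc ∑ l, 𝒲 i l * ∑ j, (𝒲 ^ k') l j ≤ ∑ l, 𝒲 i l * lam ^ k' := step1
      _ = lam ^ k' * ∑ l, 𝒲 i l := by rw [← Finset.sum_mul, mul_comm]
  -- conclude via the sup
  have hne : Nonempty (Fin n) := Fin.pos_iff_nonempty.mp hn
  have hbdd : BddAbove (Set.range fun i => ∑ j, |𝒲 i j|) :=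
    Set.Finite.bddAbove (Set.finite_range _)
  have habs : ∀ (r : ℕ) (i : Fin n), ∑ j, |(𝒲 ^ r) i j| = ∑ j, (𝒲 ^ r) i j := by
    intro r i
    exact Finset.sum_congr rfl fun j _ => abs_of_nonneg (pownn r i j)
  show rowNorm (𝒲 ^ (k' + 1)) ≤ lam ^ (k' + 1 - 1) * rowNorm 𝒲
  rw [rowNorm, Nat.add_sub_cancel]
  apply ciSup_le
  intro i
  calc ∑ j, |(𝒲 ^ (k' + 1)) i j| = ∑ j, (𝒲 ^ (k' + 1)) i j := habs _ i
    _ ≤ lam ^ k' * ∑ j, 𝒲 i j := rowbound i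
    _ = lam ^ k' * ∑ j, |𝒲 i j| := by
        rw [show (∑ j, |𝒲 i j|) = ∑ j, 𝒲 i j from
          Finset.sum_congr rfl fun j _ => abs_of_nonneg (Wnn i j)]
    _ ≤ lam ^ k' * rowNorm 𝒲 :=
        mul_le_mul_of_nonneg_left (le_ciSup hbdd i) (pow_nonneg hlam0 k')
end

section
/- Let 𝒥 = (J_1,…,J_m) be a cover of I = {1,…,n}, and for each k let P^{J_k} be a Markov kernel on X^n admitting a Wasserstein matrix W^{J_k} that has the Gibbs block structure for J_k; assume condition (A1) with constant λ ∈ [0,1). Let 𝒫 = P^{J_1} ∘ P^{J_2} ∘ ⋯ ∘ P^{J_m} (the composite kernel applying P^{J_1} first) and 𝒲 = W^{J_m}·W^{J_{m−1}}⋯W^{J_1}. Then for any two probability measures μ, ν on X^n, any coupling Ψ of μ and ν, any bounded measurable f : X^n → ℝ, and any integer k ≥ 1: |∫ 𝒫^k f dμ − ∫ 𝒫^k f dν| ≤ ‖𝒲‖_∞ · λ^{k−1} · max_{j∈I} Ψ({(x,z) : x_j ≠ z_j}) · Σ_{i∈I} osc_i(f). -/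
open MeasureTheory ProbabilityTheory Finset
open scoped ENNReal

/-- Oscillation of `f` with respect to the `i`-th coordinate. -/
noncomputable def osc {n : ℕ} {X : Type*} (i : Fin n) (f : (Fin n → X) → ℝ) : ℝ :=
  sSup {d : ℝ | ∃ x z : Fin n → X, (∀ k, k ≠ i → x k = z k) ∧ d = |f x - f z|}

/-- `W` is a Wasserstein matrix for the Markov kernel `P` on `X^n`. -/
def IsWassersteinMatrix {n : ℕ} {X : Type*} [MeasurableSpace X]
    (P : Kernel (Fin n → X) (Fin n → X)) (W : Matrix (Fin n) (Fin n) ℝ) : Prop :=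
  (∀ i j, 0 ≤ W i j) ∧
  ∀ f : (Fin n → X) → ℝ, Measurable f → (∃ C, ∀ x, |f x| ≤ C) →
    ∀ j, osc j (fun x => ∫ y, f y ∂(P x)) ≤ ∑ i, osc i f * W i j

/-- `Ψ` is a coupling of `μ` and `ν`. -/
def IsCoupling {E : Type*} [MeasurableSpace E] (Ψ : Measure (E × E)) (μ ν : Measure E) : Prop :=
  Ψ.map Prod.fst = μ ∧ Ψ.map Prod.snd = ν

/-- `k`-fold composition of a Markov kernel with itself. -/
noncomputable def kpow {E : Type*} [MeasurableSpace E] (P : Kernel E E) : ℕ → Kernel E E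
  | 0 => Kernel.id
  | (k + 1) => P ∘ₖ kpow P k

/-- The composite kernel `P^{J_1} ∘ P^{J_2} ∘ ⋯ ∘ P^{J_m}` applying `P 1` first. -/
noncomputable def sweepKernel {E : Type*} [MeasurableSpace E]
    (P : ℕ → Kernel E E) (m : ℕ) : Kernel E E :=
  ((List.range m).map fun i => P (i + 1)).foldl (fun acc κ => κ ∘ₖ acc) Kernel.id

/-- The matrix product `W^{J_m} · W^{J_{m-1}} ⋯ W^{J_1}`. -/
noncomputable def sweepMat {n : ℕ} (W : ℕ → Matrix (Fin n) (Fin n) ℝ) (m : ℕ) :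
    Matrix (Fin n) (Fin n) ℝ :=
  (((List.range m).map fun i => m - i).map W).prod

/-!
Oscillation vectors `o(g) = (osc_i g)_i` are pushed forward by Wasserstein matrices,
`o(P g) ≤ o(g) ᵥ* W`, and Wasserstein matrices multiply under composition of kernels, so
`o(𝒫^k f) ≤ o(f) ᵥ* 𝒲^k`. Since the blocks cover `I`, the columns of `𝒲` outside the boundary `∂`
vanish. On nonnegative vectors supported on `∂`, the step `v ↦ v ᵥ* W^J` keeps the support and
damps the mass inside `J` by `λ` (condition (A1)) without increasing the rest; as every coordinate
lies in some block, a full sweep damps the total mass by `λ`. Finally, changing one coordinate at a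
time gives `|∫ g dμ - ∫ g dν| ≤ ∑_j osc_j g · Ψ(x_j ≠ z_j)`.
-/

open scoped Matrix

section NonnegMatrix

variable {ι κ : Type*} [Fintype ι]

lemma mul_apply_nonneg {A : Matrix κ ι ℝ} {B : Matrix ι κ ℝ} (hA : ∀ i j, 0 ≤ A i j)
    (hB : ∀ i j, 0 ≤ B i j) (i j : κ) : 0 ≤ (A * B) i j := by
  rw [Matrix.mul_apply]
  exact sum_nonneg fun t _ => mul_nonneg (hA i t) (hB t j)

lemma vecMul_nonneg {M : Matrix ι κ ℝ} (hM : ∀ i j, 0 ≤ M i j) {u : ι → ℝ} (hu : 0 ≤ u) :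
    0 ≤ u ᵥ* M :=
  fun j => by
    simp only [Matrix.vecMul, dotProduct]
    exact sum_nonneg fun i _ => mul_nonneg (hu i) (hM i j)

lemma vecMul_le_vecMul_of_le {M : Matrix ι κ ℝ} (hM : ∀ i j, 0 ≤ M i j) {u v : ι → ℝ}
    (huv : u ≤ v) : u ᵥ* M ≤ v ᵥ* M :=
  fun j => by
    simp only [Matrix.vecMul, dotProduct]
    exact sum_le_sum fun i _ => mul_le_mul_of_nonneg_right (huv i) (hM i j)

end NonnegMatrix

section Oscillation

variable {n : ℕ} {X : Type*}

lemma osc_bddAbove (i : Fin n) {f : (Fin n → X) → ℝ} {C : ℝ} (hC : ∀ x, |f x| ≤ C) :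
    BddAbove {d : ℝ | ∃ x z : Fin n → X, (∀ k, k ≠ i → x k = z k) ∧ d = |f x - f z|} := by
  refine ⟨2 * C, ?_⟩
  rintro d ⟨x, z, -, rfl⟩
  linarith [abs_sub (f x) (f z), hC x, hC z]

lemma abs_sub_le_osc {i : Fin n} {f : (Fin n → X) → ℝ} {C : ℝ} (hC : ∀ x, |f x| ≤ C)
    {x z : Fin n → X} (h : ∀ k, k ≠ i → x k = z k) : |f x - f z| ≤ osc i f :=
  le_csSup (osc_bddAbove i hC) ⟨x, z, h, rfl⟩

lemma osc_nonneg (i : Fin n) (f : (Fin n → X) → ℝ) : 0 ≤ osc i f :=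
  Real.sSup_nonneg fun _ ⟨_, _, _, hd⟩ => hd ▸ abs_nonneg _

open Classical in
lemma abs_sub_le_sum_osc {f : (Fin n → X) → ℝ} {C : ℝ} (hC : ∀ x, |f x| ≤ C)
    (x z : Fin n → X) : |f x - f z| ≤ ∑ j, if x j = z j then 0 else osc j f := by
  let y : ℕ → Fin n → X := fun t i => if (i : ℕ) < t then z i else x i
  have hstep : ∀ t : Fin n, |f (y t) - f (y (t + 1))| ≤ if x t = z t then 0 else osc t f := by
    intro t
    have hy : ∀ i, i ≠ t → y t i = y (t + 1) i := by
      intro i hi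
      have : (i : ℕ) < t ↔ (i : ℕ) < t + 1 := by have := Fin.val_ne_of_ne hi; omega
      simp only [y, this]
    split_ifs with hxz
    · have : y t = y (t + 1) := funext fun i => by
        by_cases hi : i = t
        · simp [y, hi, hxz]
        · exact hy i hi
      simp [this]
    · exact abs_sub_le_osc hC hy
  calc |f x - f z| = |∑ t ∈ range n, (f (y t) - f (y (t + 1)))| := by
        rw [sum_range_sub', show y 0 = x from funext fun i => by simp [y],
          show y n = z from funext fun i => by simp [y]]
    _ ≤ ∑ t ∈ range n, |f (y t) - f (y (t + 1))| := abs_sum_le_sum_abs _ _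
    _ = ∑ t : Fin n, |f (y t) - f (y (t + 1))| :=
        (Fin.sum_univ_eq_sum_range (fun t => |f (y t) - f (y (t + 1))|) n).symm
    _ ≤ _ := sum_le_sum fun t _ => hstep t

end Oscillation

section KernelIntegral

variable {E : Type*} [MeasurableSpace E]

lemma integrable_of_abs_le {μ : Measure E} [IsFiniteMeasure μ] {g : E → ℝ} (hg : Measurable g)
    {C : ℝ} (hC : ∀ x, |g x| ≤ C) : Integrable g μ :=
  .of_bound hg.aestronglyMeasurable C (ae_of_all _ fun x => (Real.norm_eq_abs _).trans_le (hC x))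

lemma abs_integral_le_of_abs_le (μ : Measure E) [IsProbabilityMeasure μ] {g : E → ℝ} {C : ℝ}
    (hC : ∀ x, |g x| ≤ C) : |∫ y, g y ∂μ| ≤ C := by
  simpa using norm_integral_le_of_norm_le_const (μ := μ)
    (ae_of_all _ fun x => (Real.norm_eq_abs (g x)).trans_le (hC x))

lemma measurable_integral_kernel (κ : Kernel E E) {g : E → ℝ} (hg : Measurable g) :
    Measurable fun x => ∫ y, g y ∂κ x :=
  hg.stronglyMeasurable.integral_kernel.measurable

end KernelIntegral

section Wasserstein

variable {n : ℕ} {X : Type*} [MeasurableSpace X]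

lemma IsWassersteinMatrix.osc_le {P : Kernel (Fin n → X) (Fin n → X)}
    {W : Matrix (Fin n) (Fin n) ℝ} (hW : IsWassersteinMatrix P W) {f : (Fin n → X) → ℝ}
    (hf : Measurable f) {C : ℝ} (hC : ∀ x, |f x| ≤ C) :
    (fun j => osc j fun x => ∫ y, f y ∂P x) ≤ (fun i => osc i f) ᵥ* W :=
  hW.2 f hf ⟨C, hC⟩

lemma isWassersteinMatrix_id :
    IsWassersteinMatrix (Kernel.id : Kernel (Fin n → X) (Fin n → X)) 1 := by
  refine ⟨Matrix.zero_le_one_elem, fun f hf _ j => ?_⟩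
  have hid : (fun x => ∫ y, f y ∂(Kernel.id : Kernel (Fin n → X) (Fin n → X)) x) = f :=
    funext fun x => by rw [Kernel.id_apply, integral_dirac' f x hf.stronglyMeasurable]
  simp only [hid]
  exact (congrFun (Matrix.vecMul_one (fun i => osc i f)) j).ge

lemma IsWassersteinMatrix.comp {κ η : Kernel (Fin n → X) (Fin n → X)} [IsMarkovKernel κ]
    [IsMarkovKernel η] {A B : Matrix (Fin n) (Fin n) ℝ} (hA : IsWassersteinMatrix κ A)
    (hB : IsWassersteinMatrix η B) : IsWassersteinMatrix (κ ∘ₖ η) (A * B) := by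
  refine ⟨mul_apply_nonneg hA.1 hB.1, ?_⟩
  rintro f hf ⟨C, hC⟩
  show _ ≤ (fun i => osc i f) ᵥ* (A * B)
  have hcomp : (fun x => ∫ y, f y ∂(κ ∘ₖ η) x) = fun x => ∫ b, ∫ y, f y ∂κ b ∂η x :=
    funext fun x => Kernel.integral_comp (integrable_of_abs_le hf hC)
  rw [hcomp, ← Matrix.vecMul_vecMul]
  calc _ ≤ (fun i => osc i fun b => ∫ y, f y ∂κ b) ᵥ* B :=
        hB.osc_le (measurable_integral_kernel κ hf) fun b => abs_integral_le_of_abs_le (κ b) hC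
    _ ≤ _ := vecMul_le_vecMul_of_le hB.1 (hA.osc_le hf hC)

instance isMarkovKernel_kpow {E : Type*} [MeasurableSpace E] (P : Kernel E E) [IsMarkovKernel P]
    (r : ℕ) : IsMarkovKernel (kpow P r) := by
  induction r with
  | zero => exact inferInstanceAs (IsMarkovKernel Kernel.id)
  | succ r ih => exact inferInstanceAs (IsMarkovKernel (P ∘ₖ kpow P r))

lemma IsWassersteinMatrix.kpow {P : Kernel (Fin n → X) (Fin n → X)} [IsMarkovKernel P]
    {W : Matrix (Fin n) (Fin n) ℝ} (hW : IsWassersteinMatrix P W) (r : ℕ) :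
    IsWassersteinMatrix (kpow P r) (W ^ r) := by
  induction r with
  | zero => exact isWassersteinMatrix_id
  | succ r ih => rw [pow_succ']; exact hW.comp ih

end Wasserstein

section Sweep

variable {n m : ℕ} {X : Type*} [MeasurableSpace X]

lemma Icc_one_add_one (m : ℕ) : Icc 1 (m + 1) = insert (m + 1) (Icc 1 m) :=
  (insert_Icc_right_eq_Icc_succ (by simp)).symm

lemma sweepKernel_succ {E : Type*} [MeasurableSpace E] (P : ℕ → Kernel E E) (m : ℕ) :
    sweepKernel P (m + 1) = P (m + 1) ∘ₖ sweepKernel P m := by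
  simp [sweepKernel, List.range_succ]

lemma sweepMat_succ (W : ℕ → Matrix (Fin n) (Fin n) ℝ) (m : ℕ) :
    sweepMat W (m + 1) = W (m + 1) * sweepMat W m := by
  simp [sweepMat, List.range_succ_eq_map, Function.comp_def]

lemma isMarkovKernel_sweepKernel {E : Type*} [MeasurableSpace E] {P : ℕ → Kernel E E}
    (hP : ∀ k ∈ Icc 1 m, IsMarkovKernel (P k)) : IsMarkovKernel (sweepKernel P m) := by
  induction m with
  | zero => exact inferInstanceAs (IsMarkovKernel Kernel.id)
  | succ m ih =>
    rw [Icc_one_add_one, forall_mem_insert] at hP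
    have := ih hP.2
    have := hP.1
    rw [sweepKernel_succ]
    infer_instance

lemma isWassersteinMatrix_sweepKernel {P : ℕ → Kernel (Fin n → X) (Fin n → X)}
    {W : ℕ → Matrix (Fin n) (Fin n) ℝ} (hP : ∀ k ∈ Icc 1 m, IsMarkovKernel (P k))
    (hW : ∀ k ∈ Icc 1 m, IsWassersteinMatrix (P k) (W k)) :
    IsWassersteinMatrix (sweepKernel P m) (sweepMat W m) := by
  induction m with
  | zero => exact isWassersteinMatrix_id
  | succ m ih =>
    rw [Icc_one_add_one, forall_mem_insert] at hP hW
    have := isMarkovKernel_sweepKernel hP.2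
    have := hP.1
    rw [sweepKernel_succ, sweepMat_succ]
    exact hW.1.comp (ih hP.2 hW.2)

end Sweep

namespace GibbsBlock

variable {n : ℕ} {J D : Finset (Fin n)} {W : Matrix (Fin n) (Fin n) ℝ}

lemma vecMul_apply (hW : GibbsBlock J W) (v : Fin n → ℝ) (t : Fin n) :
    (v ᵥ* W) t = ∑ i ∈ J, v i * W i t + if t ∈ J then 0 else v t := by
  have houtside : ∑ i ∈ univ.filter (· ∉ J), v i * W i t = if t ∈ J then 0 else v t := by
    rw [sum_congr rfl fun i hi => by rw [hW.2.1 i (mem_filter.1 hi).2 t, mul_ite, mul_one,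
      mul_zero], sum_ite_eq']
    by_cases ht : t ∈ J <;> simp [ht]
  rw [Matrix.vecMul, dotProduct, ← sum_filter_add_sum_filter_not univ (· ∈ J), houtside,
    filter_mem_eq_inter, univ_inter]

lemma vecMul_apply_of_notMem_bdry (hW : GibbsBlock J W) (v : Fin n → ℝ) {t : Fin n}
    (ht : t ∉ bdry J) : (v ᵥ* W) t = if t ∈ J then 0 else v t := by
  rw [hW.vecMul_apply, sum_eq_zero fun i hi => by rw [hW.2.2 i hi t ht, mul_zero], zero_add]

lemma sum_row_eq_sum_bdry (hW : GibbsBlock J W) {i : Fin n} (hi : i ∈ J) :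
    ∑ t, W i t = ∑ t ∈ bdry J, W i t :=
  (sum_subset (subset_univ _) fun t _ ht => hW.2.2 i hi t ht).symm

/-- The mass of `v` inside `J` is damped by `λ` and moved to `∂J`, where the weights are at most
`1`; the mass outside `J` stays in place. -/
lemma sum_mul_vecMul_le (hW : GibbsBlock J W) {lam : ℝ}
    (hA1 : ∀ i ∈ J, i ∈ D → ∑ j ∈ bdry J, W i j ≤ lam) {v : Fin n → ℝ} (hv : 0 ≤ v)
    (hvD : ∀ i ∉ D, v i = 0) {c : Fin n → ℝ} (hc : c ≤ 1) :
    ∑ t, c t * (v ᵥ* W) t ≤ ∑ t, (if t ∈ J then lam else c t) * v t := by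
  have hrow : ∀ i ∈ J, v i * ∑ t, c t * W i t ≤ lam * v i := by
    intro i hi
    by_cases hiD : i ∈ D
    · calc v i * ∑ t, c t * W i t ≤ v i * ∑ t, W i t :=
            mul_le_mul_of_nonneg_left
              (sum_le_sum fun t _ => mul_le_of_le_one_left (hW.1 i t).1 (hc t)) (hv i)
        _ ≤ v i * lam := by
            rw [hW.sum_row_eq_sum_bdry hi]
            exact mul_le_mul_of_nonneg_left (hA1 i hi hiD) (hv i)
        _ = lam * v i := mul_comm _ _
    · simp [hvD i hiD]
  calc ∑ t, c t * (v ᵥ* W) t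
      = ∑ i ∈ J, v i * ∑ t, c t * W i t + ∑ t, if t ∈ J then 0 else c t * v t := by
        simp_rw [hW.vecMul_apply, mul_add, sum_add_distrib, mul_sum, mul_ite, mul_zero]
        rw [sum_comm]
        simp_rw [mul_left_comm (c _)]
    _ ≤ ∑ i ∈ J, lam * v i + ∑ t, if t ∈ J then 0 else c t * v t := by
        gcongr ?_ + _
        exact sum_le_sum hrow
    _ = _ := by
        rw [← univ_inter J, ← sum_ite_mem, ← sum_add_distrib, univ_inter]
        exact sum_congr rfl fun t _ => by split_ifs <;> ring

end GibbsBlock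

section SweepMat

variable {n m : ℕ} {J : ℕ → Finset (Fin n)} {W : ℕ → Matrix (Fin n) (Fin n) ℝ}

def covered (J : ℕ → Finset (Fin n)) (m : ℕ) : Finset (Fin n) :=
  (Icc 1 m).biUnion J

lemma covered_succ (J : ℕ → Finset (Fin n)) (m : ℕ) :
    covered J (m + 1) = J (m + 1) ∪ covered J m := by
  rw [covered, covered, Icc_one_add_one, biUnion_insert]

lemma vecMul_sweepMat_apply_of_notMem_bdry (hblock : ∀ k ∈ Icc 1 m, GibbsBlock (J k) (W k))
    {t : Fin n} (ht : ∀ k ∈ Icc 1 m, t ∉ bdry (J k)) (v : Fin n → ℝ) :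
    (v ᵥ* sweepMat W m) t = if t ∈ covered J m then 0 else v t := by
  induction m generalizing v with
  | zero => simp [sweepMat, covered]
  | succ m ih =>
    rw [Icc_one_add_one, forall_mem_insert] at hblock ht
    rw [sweepMat_succ, ← Matrix.vecMul_vecMul, ih hblock.2 ht.2,
      hblock.1.vecMul_apply_of_notMem_bdry _ ht.1]
    simp only [covered_succ, mem_union]
    split_ifs <;> tauto

lemma sum_vecMul_sweepMat_le (hblock : ∀ k ∈ Icc 1 m, GibbsBlock (J k) (W k))
    {D : Finset (Fin n)} (hbdry : ∀ k ∈ Icc 1 m, bdry (J k) ⊆ D) {lam : ℝ} (hlam1 : lam ≤ 1)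
    (hA1 : ∀ k ∈ Icc 1 m, ∀ i ∈ J k, i ∈ D → ∑ j ∈ bdry (J k), W k i j ≤ lam)
    {v : Fin n → ℝ} (hv : 0 ≤ v) (hvD : ∀ i ∉ D, v i = 0) :
    ∑ t, (v ᵥ* sweepMat W m) t ≤ ∑ t, (if t ∈ covered J m then lam else 1) * v t := by
  induction m generalizing v with
  | zero => simp [sweepMat, covered]
  | succ m ih =>
    rw [Icc_one_add_one, forall_mem_insert] at hblock hbdry hA1
    have hW := hblock.1
    have hv' : 0 ≤ v ᵥ* W (m + 1) := vecMul_nonneg (fun i j => (hW.1 i j).1) hv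
    have hv'D : ∀ t ∉ D, (v ᵥ* W (m + 1)) t = 0 := fun t ht => by
      rw [hW.vecMul_apply_of_notMem_bdry v fun h => ht (hbdry.1 h), hvD t ht, ite_self]
    calc ∑ t, (v ᵥ* sweepMat W (m + 1)) t = ∑ t, (v ᵥ* W (m + 1) ᵥ* sweepMat W m) t := by
          rw [sweepMat_succ, Matrix.vecMul_vecMul]
      _ ≤ ∑ t, (if t ∈ covered J m then lam else 1) * (v ᵥ* W (m + 1)) t :=
          ih hblock.2 hbdry.2 hA1.2 hv' hv'D
      _ ≤ ∑ t, (if t ∈ J (m + 1) then lam else if t ∈ covered J m then lam else 1) * v t :=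
          hW.sum_mul_vecMul_le hA1.1 hv hvD fun t => by
            dsimp only [Pi.one_apply]
            split_ifs <;> linarith
      _ = _ := by
          simp only [covered_succ, mem_union]
          exact sum_congr rfl fun t _ => by split_ifs <;> tauto

lemma sweepMat_nonneg (hblock : ∀ k ∈ Icc 1 m, GibbsBlock (J k) (W k)) (i j : Fin n) :
    0 ≤ sweepMat W m i j := by
  induction m generalizing i with
  | zero => exact Matrix.zero_le_one_elem i j
  | succ m ih =>
    rw [Icc_one_add_one, forall_mem_insert] at hblock
    rw [sweepMat_succ]
    exact mul_apply_nonneg (fun i t => (hblock.1.1 i t).1) (fun t _ => ih hblock.2 t) i j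

lemma sum_vecMul_sweepMat_sweepMat_le (hcover : ∀ i : Fin n, ∃ k ∈ Icc 1 m, i ∈ J k)
    (hblock : ∀ k ∈ Icc 1 m, GibbsBlock (J k) (W k)) {lam : ℝ} (hlam1 : lam ≤ 1)
    (hA1 : ∀ k ∈ Icc 1 m, ∀ i ∈ J k, i ∈ (Icc 1 m).biUnion (fun l => bdry (J l)) →
      ∑ j ∈ bdry (J k), W k i j ≤ lam)
    {u : Fin n → ℝ} (hu : 0 ≤ u) :
    ∑ j, (u ᵥ* sweepMat W m ᵥ* sweepMat W m) j ≤ lam * ∑ j, (u ᵥ* sweepMat W m) j := by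
  have hcov : covered J m = univ := eq_univ_of_forall fun i => mem_biUnion.2 (hcover i)
  -- every coordinate is resampled during a sweep, so mass can only end up on the boundary
  have hsupp : ∀ t ∉ (Icc 1 m).biUnion fun l => bdry (J l), (u ᵥ* sweepMat W m) t = 0 :=
    fun t ht => by
      rw [vecMul_sweepMat_apply_of_notMem_bdry hblock
        (fun k hk h => ht (mem_biUnion.2 ⟨k, hk, h⟩)), hcov, if_pos (mem_univ t)]
  simpa [hcov, mul_sum] using sum_vecMul_sweepMat_le hblock
    (fun k hk => subset_biUnion_of_mem (fun l => bdry (J l)) hk) hlam1 hA1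
    (vecMul_nonneg (sweepMat_nonneg hblock) hu) hsupp

end SweepMat

section Contraction

variable {n : ℕ} {M : Matrix (Fin n) (Fin n) ℝ}

lemma sum_vecMul_pow_succ_le (hM : ∀ i j, 0 ≤ M i j) {lam : ℝ} (hlam : 0 ≤ lam)
    (hcontr : ∀ u, 0 ≤ u → ∑ j, (u ᵥ* M ᵥ* M) j ≤ lam * ∑ j, (u ᵥ* M) j)
    (r : ℕ) {u : Fin n → ℝ} (hu : 0 ≤ u) :
    ∑ j, (u ᵥ* M ^ (r + 1)) j ≤ lam ^ r * ∑ j, (u ᵥ* M) j := by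
  induction r generalizing u with
  | zero => simp
  | succ r ih =>
    calc ∑ j, (u ᵥ* M ^ (r + 2)) j = ∑ j, (u ᵥ* M ᵥ* M ^ (r + 1)) j := by
          rw [pow_succ' M (r + 1), Matrix.vecMul_vecMul]
      _ ≤ lam ^ r * ∑ j, (u ᵥ* M ᵥ* M) j := ih (vecMul_nonneg hM hu)
      _ ≤ lam ^ r * (lam * ∑ j, (u ᵥ* M) j) := by gcongr; exact hcontr u hu
      _ = lam ^ (r + 1) * ∑ j, (u ᵥ* M) j := by ring

lemma sum_vecMul_le_rowNorm_mul (hM : ∀ i j, 0 ≤ M i j) {u : Fin n → ℝ} (hu : 0 ≤ u) :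
    ∑ j, (u ᵥ* M) j ≤ rowNorm M * ∑ i, u i := by
  have hrow : ∀ i, ∑ j, M i j ≤ rowNorm M := fun i =>
    calc ∑ j, M i j = ∑ j, |M i j| := sum_congr rfl fun j _ => (abs_of_nonneg (hM i j)).symm
      _ ≤ rowNorm M := le_ciSup (f := fun i => ∑ j, |M i j|) (Set.finite_range _).bddAbove i
  calc ∑ j, (u ᵥ* M) j = ∑ i, u i * ∑ j, M i j := by
        simp only [Matrix.vecMul, dotProduct, mul_sum]
        exact sum_comm
    _ ≤ ∑ i, u i * rowNorm M := by gcongr with i; exacts [hu i, hrow i]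
    _ = rowNorm M * ∑ i, u i := by rw [← sum_mul, mul_comm]

end Contraction

section Decay

variable {n : ℕ} {X : Type*} [MeasurableSpace X]

lemma sum_osc_kpow_succ_le {P : Kernel (Fin n → X) (Fin n → X)} [IsMarkovKernel P]
    {M : Matrix (Fin n) (Fin n) ℝ} (hPM : IsWassersteinMatrix P M) {lam : ℝ} (hlam : 0 ≤ lam)
    (hcontr : ∀ u, 0 ≤ u → ∑ j, (u ᵥ* M ᵥ* M) j ≤ lam * ∑ j, (u ᵥ* M) j)
    {f : (Fin n → X) → ℝ} (hf : Measurable f) {C : ℝ} (hC : ∀ x, |f x| ≤ C) (r : ℕ) :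
    ∑ j, osc j (fun x => ∫ y, f y ∂kpow P (r + 1) x) ≤
      lam ^ r * (rowNorm M * ∑ i, osc i f) :=
  calc ∑ j, osc j (fun x => ∫ y, f y ∂kpow P (r + 1) x)
      ≤ ∑ j, ((fun i => osc i f) ᵥ* M ^ (r + 1)) j :=
        sum_le_sum fun j _ => (hPM.kpow (r + 1)).osc_le hf hC j
    _ ≤ lam ^ r * ∑ j, ((fun i => osc i f) ᵥ* M) j :=
        sum_vecMul_pow_succ_le hPM.1 hlam hcontr r fun i => osc_nonneg i f
    _ ≤ lam ^ r * (rowNorm M * ∑ i, osc i f) := by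
        gcongr
        exact sum_vecMul_le_rowNorm_mul hPM.1 fun i => osc_nonneg i f

lemma abs_integral_sub_integral_le_of_isCoupling [MeasurableEq X] {μ ν : Measure (Fin n → X)}
    {Ψ : Measure ((Fin n → X) × (Fin n → X))} [IsFiniteMeasure Ψ] (hΨ : IsCoupling Ψ μ ν)
    {g : (Fin n → X) → ℝ} (hg : Measurable g) {C : ℝ} (hC : ∀ x, |g x| ≤ C) :
    |∫ x, g x ∂μ - ∫ x, g x ∂ν| ≤ ∑ j, osc j g * (Ψ {q | q.1 j ≠ q.2 j}).toReal := by
  have hS : ∀ j, MeasurableSet {q : (Fin n → X) × (Fin n → X) | q.1 j ≠ q.2 j} := fun j =>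
    (measurableSet_eq_fun ((measurable_pi_apply j).comp measurable_fst)
      ((measurable_pi_apply j).comp measurable_snd)).compl
  have hint : ∀ j, Integrable ({q | q.1 j ≠ q.2 j}.indicator fun _ => osc j g) Ψ := fun j =>
    (integrable_const _).indicator (hS j)
  have hg1 : Integrable (fun q => g q.1) Ψ :=
    integrable_of_abs_le (hg.comp measurable_fst) fun q => hC q.1
  have hg2 : Integrable (fun q => g q.2) Ψ :=
    integrable_of_abs_le (hg.comp measurable_snd) fun q => hC q.2
  rw [← hΨ.1, ← hΨ.2, integral_map measurable_fst.aemeasurable hg.aestronglyMeasurable,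
    integral_map measurable_snd.aemeasurable hg.aestronglyMeasurable, ← integral_sub hg1 hg2]
  calc |∫ q, g q.1 - g q.2 ∂Ψ| ≤ ∫ q, |g q.1 - g q.2| ∂Ψ := abs_integral_le_integral_abs
    _ ≤ ∫ q, ∑ j, {q | q.1 j ≠ q.2 j}.indicator (fun _ => osc j g) q ∂Ψ := by
        refine integral_mono (hg1.sub hg2).abs (integrable_finsetSum _ fun j _ => hint j)
          fun q => (abs_sub_le_sum_osc hC q.1 q.2).trans_eq ?_
        classical
        refine sum_congr rfl fun j _ => ?_
        rw [Set.indicator_apply]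
        simp only [Set.mem_ofPred_eq, ite_not]
    _ = _ := by
        rw [integral_finsetSum _ fun j _ => hint j]
        simp [integral_indicator_const _ (hS _), Measure.real, mul_comm]

lemma abs_integral_sub_integral_le_iSup_mul_sum_osc [MeasurableEq X]
    {μ ν : Measure (Fin n → X)} {Ψ : Measure ((Fin n → X) × (Fin n → X))} [IsFiniteMeasure Ψ]
    (hΨ : IsCoupling Ψ μ ν) {g : (Fin n → X) → ℝ} (hg : Measurable g) {C : ℝ}
    (hC : ∀ x, |g x| ≤ C) :
    |∫ x, g x ∂μ - ∫ x, g x ∂ν| ≤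
      (⨆ j : Fin n, (Ψ {q | q.1 j ≠ q.2 j}).toReal) * ∑ j, osc j g :=
  calc |∫ x, g x ∂μ - ∫ x, g x ∂ν| ≤ ∑ j, osc j g * (Ψ {q | q.1 j ≠ q.2 j}).toReal :=
        abs_integral_sub_integral_le_of_isCoupling hΨ hg hC
    _ ≤ ∑ j, osc j g * ⨆ j : Fin n, (Ψ {q | q.1 j ≠ q.2 j}).toReal := by
        gcongr with j
        exacts [osc_nonneg j g, le_ciSup (f := fun j : Fin n => (Ψ {q | q.1 j ≠ q.2 j}).toReal)
          (Set.finite_range _).bddAbove j]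
    _ = _ := by rw [← sum_mul, mul_comm]

end Decay

theorem stmt1_general {n m : ℕ} {X : Type*} [MeasurableSpace X] [StandardBorelSpace X]
    (J : ℕ → Finset (Fin n))
    (P : ℕ → Kernel (Fin n → X) (Fin n → X)) (hP : ∀ k, IsMarkovKernel (P k))
    (W : ℕ → Matrix (Fin n) (Fin n) ℝ)
    (hcover : ∀ i : Fin n, ∃ k ∈ Finset.Icc 1 m, i ∈ J k)
    (hblock : ∀ k ∈ Finset.Icc 1 m, GibbsBlock (J k) (W k))
    (hWass : ∀ k ∈ Finset.Icc 1 m, IsWassersteinMatrix (P k) (W k))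
    (lam : ℝ) (hlam0 : 0 ≤ lam) (hlam1 : lam < 1)
    (hA1 : ∀ k ∈ Finset.Icc 1 m, ∀ i ∈ J k,
      i ∈ (Finset.Icc 1 m).biUnion (fun l => bdry (J l)) →
      ∑ j ∈ bdry (J k), W k i j ≤ lam)
    (μ ν : Measure (Fin n → X))
    (Ψ : Measure ((Fin n → X) × (Fin n → X))) [IsProbabilityMeasure Ψ]
    (hΨ : IsCoupling Ψ μ ν)
    (f : (Fin n → X) → ℝ) (hf : Measurable f) (hfb : ∃ C, ∀ x, |f x| ≤ C)
    (k : ℕ) (hk : 1 ≤ k) :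
    |(∫ x, (∫ y, f y ∂(kpow (sweepKernel P m) k x)) ∂μ) -
        ∫ x, (∫ y, f y ∂(kpow (sweepKernel P m) k x)) ∂ν| ≤
      rowNorm (sweepMat W m) * lam ^ (k - 1) *
        (⨆ j : Fin n, (Ψ {q | q.1 j ≠ q.2 j}).toReal) * ∑ i : Fin n, osc i f := by
  obtain ⟨C, hC⟩ := hfb
  obtain ⟨r, rfl⟩ : ∃ r, k = r + 1 := ⟨k - 1, by omega⟩
  have := isMarkovKernel_sweepKernel fun k (_ : k ∈ Icc 1 m) => hP k
  have hWM := isWassersteinMatrix_sweepKernel (fun k _ => hP k) hWass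
  have hdecay := sum_osc_kpow_succ_le hWM hlam0
    (fun u hu => sum_vecMul_sweepMat_sweepMat_le hcover hblock hlam1.le hA1 hu) hf hC r
  calc _ ≤ (⨆ j : Fin n, (Ψ {q | q.1 j ≠ q.2 j}).toReal) *
        ∑ j, osc j (fun x => ∫ y, f y ∂kpow (sweepKernel P m) (r + 1) x) :=
        abs_integral_sub_integral_le_iSup_mul_sum_osc hΨ (measurable_integral_kernel _ hf)
          fun x => abs_integral_le_of_abs_le _ hC
    _ ≤ (⨆ j : Fin n, (Ψ {q | q.1 j ≠ q.2 j}).toReal) *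
        (lam ^ r * (rowNorm (sweepMat W m) * ∑ i, osc i f)) := by
        gcongr
        exact Real.iSup_nonneg fun j => ENNReal.toReal_nonneg
    _ = _ := by
        rw [Nat.add_sub_cancel]
        ring

theorem stmt1 {n m : ℕ} {X : Type*} [MeasurableSpace X] [StandardBorelSpace X]
    (hn : 1 ≤ n) (hm : 1 ≤ m)
    (J : ℕ → Finset (Fin n))
    (P : ℕ → Kernel (Fin n → X) (Fin n → X)) (hP : ∀ k, IsMarkovKernel (P k))
    (W : ℕ → Matrix (Fin n) (Fin n) ℝ)
    (hcover : ∀ i : Fin n, ∃ k ∈ Finset.Icc 1 m, i ∈ J k)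
    (hblock : ∀ k ∈ Finset.Icc 1 m, GibbsBlock (J k) (W k))
    (hWass : ∀ k ∈ Finset.Icc 1 m, IsWassersteinMatrix (P k) (W k))
    (lam : ℝ) (hlam0 : 0 ≤ lam) (hlam1 : lam < 1)
    (hA1 : ∀ k ∈ Finset.Icc 1 m, ∀ i ∈ J k,
      i ∈ (Finset.Icc 1 m).biUnion (fun l => bdry (J l)) →
      ∑ j ∈ bdry (J k), W k i j ≤ lam)
    (μ ν : Measure (Fin n → X)) [IsProbabilityMeasure μ] [IsProbabilityMeasure ν]
    (Ψ : Measure ((Fin n → X) × (Fin n → X))) [IsProbabilityMeasure Ψ]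
    (hΨ : IsCoupling Ψ μ ν)
    (f : (Fin n → X) → ℝ) (hf : Measurable f) (hfb : ∃ C, ∀ x, |f x| ≤ C)
    (k : ℕ) (hk : 1 ≤ k) :
    |(∫ x, (∫ y, f y ∂(kpow (sweepKernel P m) k x)) ∂μ) -
        ∫ x, (∫ y, f y ∂(kpow (sweepKernel P m) k x)) ∂ν| ≤
      rowNorm (sweepMat W m) * lam ^ (k - 1) *
        (⨆ j : Fin n, (Ψ {q | q.1 j ≠ q.2 j}).toReal) * ∑ i : Fin n, osc i f :=
  stmt1_general J P hP W hcover hblock hWass lam hlam0 hlam1 hA1 μ ν Ψ hΨ f hf hfb k hk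
end

section
/- Fix an odd integer m ≥ 3, integers h ≥ 1 and 0 ≤ p < L, and reals α ∈ [0,1), ε ∈ [0,1). On the index set I_Ξ = {1,…,2m−1}, for k = 1,…,m let B_k = {2k−2, 2k−1, 2k} ∩ I_Ξ and define the (2m−1)×(2m−1) matrix W^k as follows: rows with index outside B_k coincide with the corresponding rows of the identity matrix; rows with index in B_k are zero except W^k_{2k−2,2k−3} = α^{⌊1/h⌋}, W^k_{2k−2,2k+1} = α^{⌊(L−p+1)/h⌋}, W^k_{2k−1,2k−3} = W^k_{2k−1,2k+1} = α^{⌊(p+1)/h⌋}, W^k_{2k,2k−3} = α^{⌊(L−p+1)/h⌋}, W^k_{2k,2k+1} = α^{⌊1/h⌋}, where any entry whose row or column index lies outside I_Ξ is omitted. Let Ŵ^k have entries Ŵ^k_{i,j} = W^k_{i,j} + ε·1[2k−2 ≤ i ≤ 2k and 2k−3 ≤ j ≤ 2k+1]. Set λ = 2α^{⌊(p+1)/h⌋} and W̄ = α^{⌊1/h⌋} + α^{⌊(L−p+1)/h⌋}, and assume λ < 1. Then for the parallel-sweep composite matrix 𝒲̂ = (Ŵ^{m−1}·Ŵ^{m−3}⋯Ŵ^{4}·Ŵ^{2})·(Ŵ^{m}·Ŵ^{m−2}⋯Ŵ^{3}·Ŵ^{1}),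 one has ‖𝒲̂‖_∞ ≤ λ·max(W̄,1) + ε·(2λ + 25ε + 8·max(W̄,1)). -/
/-!
Rows of `Ŵ^k` outside the block `B_k` are identity rows, and rows in `B_k` are supported on the
columns `2k-3, …, 2k+1`. For `k` of one parity these columns miss the other blocks of that
parity, so row `i` of a one-parity sweep is row `i` of the `Ŵ^k` whose block contains `i`, or an
identity row. Hence every row sum of the odd sweep is at most `max(W̄,1) + 5ε`, and at most
`λ + 5ε` on the middle rows `2k-1` of the odd blocks.

A row of an even block `B_k` has entries `w₁ + ε`, `w₂ + ε` in the columns `2k-3`, `2k+1`, which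
are middle rows of the odd blocks `k ∓ 1`, with `w₁ + w₂ ≤ max(W̄,λ) ≤ max(W̄,1)`, and entries `ε`
in the three columns of `B_k`. Its row sum in the composite is therefore at most
`(max(W̄,1) + 2ε)(λ + 5ε) + 3ε(max(W̄,1) + 5ε)`, which is the bound. The remaining rows lie in no
even block; they are middle rows of odd blocks.
-/

open Finset

/-- Entry `(i,j)` (in 1-based paper indexing, as integers) of the Wasserstein matrix `W^k`
of the lumped Ξ-system for block `k`: rows outside `B_k = {2k-2, 2k-1, 2k} ∩ {1,…,2m-1}`
are identity rows; rows in `B_k` are zero except for the prescribed boundary entries. -/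
noncomputable def wXi (m h L p : ℕ) (α : ℝ) (k : ℕ) (i j : ℤ) : ℝ :=
  if 2 * (k : ℤ) - 2 ≤ i ∧ i ≤ 2 * (k : ℤ) ∧ 1 ≤ i ∧ i ≤ 2 * (m : ℤ) - 1 then
    if i = 2 * (k : ℤ) - 2 ∧ j = 2 * (k : ℤ) - 3 then α ^ (1 / h)
    else if i = 2 * (k : ℤ) - 2 ∧ j = 2 * (k : ℤ) + 1 then α ^ ((L - p + 1) / h)
    else if i = 2 * (k : ℤ) - 1 ∧ (j = 2 * (k : ℤ) - 3 ∨ j = 2 * (k : ℤ) + 1) then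
      α ^ ((p + 1) / h)
    else if i = 2 * (k : ℤ) ∧ j = 2 * (k : ℤ) - 3 then α ^ ((L - p + 1) / h)
    else if i = 2 * (k : ℤ) ∧ j = 2 * (k : ℤ) + 1 then α ^ (1 / h)
    else 0
  else if i = j then 1 else 0

/-- Entry `(i,j)` (1-based integer indexing) of the ε-perturbed matrix `Ŵ^k`. -/
noncomputable def wXiHat (m h L p : ℕ) (α ε : ℝ) (k : ℕ) (i j : ℤ) : ℝ :=
  wXi m h L p α k i j +
    if 2 * (k : ℤ) - 2 ≤ i ∧ i ≤ 2 * (k : ℤ) ∧ 2 * (k : ℤ) - 3 ≤ j ∧ j ≤ 2 * (k : ℤ) + 1 then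
      ε
    else 0

/-- The `(2m-1) × (2m-1)` matrix `Ŵ^k` (the `Fin` index `i` corresponds to paper index `i+1`). -/
noncomputable def wHatMat (m h L p : ℕ) (α ε : ℝ) (k : ℕ) :
    Matrix (Fin (2 * m - 1)) (Fin (2 * m - 1)) ℝ :=
  fun i j => wXiHat m h L p α ε k ((i : ℤ) + 1) ((j : ℤ) + 1)

namespace Matrix

variable {n R : Type*} [Fintype n] [DecidableEq n]

theorem mul_row_eq_of_row_eq_one [NonAssocSemiring R] {A : Matrix n n R} {i : n}
    (h : A i = (1 : Matrix n n R) i) (B : Matrix n n R) : (A * B) i = B i := by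
  rw [mul_apply_eq_vecMul, h, ← mul_apply_eq_vecMul, one_mul]

theorem mul_row_eq_of_rows_eq_one [NonAssocSemiring R] {A B : Matrix n n R} {i : n}
    (h : ∀ c, A i c ≠ 0 → B c = (1 : Matrix n n R) c) : (A * B) i = A i := by
  ext j
  calc (A * B) i j = (A * (1 : Matrix n n R)) i j := by
        simp only [mul_apply]
        refine Finset.sum_congr rfl fun c _ => ?_
        by_cases hc : A i c = 0
        · simp [hc]
        · rw [h c hc]
    _ = A i j := by rw [mul_one]

section BlockProduct

variable [Semiring R] {ι : Type*} {M : ι → Matrix n n R} {S T : ι → Set n}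

theorem list_prod_map_row_eq_one (hS : ∀ k i, i ∉ S k → M k i = (1 : Matrix n n R) i)
    {l : List ι} {i : n} (hi : ∀ k ∈ l, i ∉ S k) : (l.map M).prod i = (1 : Matrix n n R) i := by
  induction l with
  | nil => rfl
  | cons a t ih =>
    rw [List.map_cons, List.prod_cons, mul_row_eq_of_row_eq_one (hS a i (hi a (by simp))),
      ih fun k hk => hi k (by simp [hk])]

theorem list_prod_map_row_eq (hS : ∀ k i, i ∉ S k → M k i = (1 : Matrix n n R) i)
    (hT : ∀ k i c, i ∈ S k → M k i c ≠ 0 → c ∈ T k) (hST : ∀ k, S k ⊆ T k) {l : List ι}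
    (hl : l.Pairwise fun a b => Disjoint (T a) (S b) ∧ Disjoint (T b) (S a))
    {k : ι} (hk : k ∈ l) {i : n} (hi : i ∈ S k) : (l.map M).prod i = M k i := by
  induction l with
  | nil => simp at hk
  | cons a t ih =>
    rw [List.pairwise_cons] at hl
    rw [List.map_cons, List.prod_cons]
    by_cases hia : i ∈ S a
    · obtain rfl : k = a := by
        rcases List.mem_cons.1 hk with rfl | hkt
        · rfl
        · exact absurd hia (Set.disjoint_left.1 (hl.1 k hkt).2 (hST k hi))
      exact mul_row_eq_of_rows_eq_one fun c hc => list_prod_map_row_eq_one hS fun b hb =>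
        Set.disjoint_left.1 (hl.1 b hb).1 (hT k i c hia hc)
    · have hkt : k ∈ t := by
        rcases List.mem_cons.1 hk with rfl | hkt
        · exact absurd hi hia
        · exact hkt
      rw [mul_row_eq_of_row_eq_one (hS a i hia), ih hl.2 hkt]

end BlockProduct

end Matrix

def rowAbsSum {l n : Type*} [Fintype n] (A : Matrix l n ℝ) (i : l) : ℝ := ∑ j, |A i j|

lemma rowAbsSum_mul_le {l m n : Type*} [Fintype m] [Fintype n] (A : Matrix l m ℝ)
    (B : Matrix m n ℝ) (i : l) : rowAbsSum (A * B) i ≤ ∑ c, |A i c| * rowAbsSum B c := by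
  calc rowAbsSum (A * B) i ≤ ∑ j, ∑ c, |A i c| * |B c j| :=
        Finset.sum_le_sum fun j _ => (Finset.abs_sum_le_sum_abs _ _).trans_eq <| by
          simp only [abs_mul]
    _ = ∑ c, |A i c| * rowAbsSum B c := by
        rw [Finset.sum_comm]; simp only [rowAbsSum, Finset.mul_sum]

lemma rowAbsSum_eq_one_of_row_eq_one {n : Type*} [Fintype n] [DecidableEq n]
    {A : Matrix n n ℝ} {i : n} (h : A i = (1 : Matrix n n ℝ) i) : rowAbsSum A i = 1 := by
  simp [rowAbsSum, h, Matrix.one_apply, apply_ite abs]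

lemma sum_ite_mul_le {α : Type*} [Fintype α] (P : α → Prop) [DecidablePred P] {N : ℕ}
    (hN : (Finset.univ.filter P).card ≤ N) {x B : ℝ} (hx : 0 ≤ x) (hB : 0 ≤ B) {r : α → ℝ}
    (hr : ∀ j, P j → r j ≤ B) : ∑ j, (if P j then x else 0) * r j ≤ N * (x * B) := by
  simp only [ite_mul, zero_mul]
  rw [← Finset.sum_filter]
  calc _ ≤ (Finset.univ.filter P).card • (x * B) :=
        Finset.sum_le_card_nsmul _ _ _ fun j hj =>
          mul_le_mul_of_nonneg_left (hr j (Finset.mem_filter.1 hj).2) hx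
    _ ≤ N * (x * B) := by
        rw [nsmul_eq_mul]; gcongr

lemma Fin.card_filter_val_mem_le {n : ℕ} (s : Finset ℕ) :
    (Finset.univ.filter fun j : Fin n => (j : ℕ) ∈ s).card ≤ s.card :=
  Finset.card_le_card_of_injOn Fin.val (fun j hj => by simpa using hj) Fin.val_injective.injOn

lemma Fin.card_filter_val_add_eq_le_one {n : ℕ} (d a : ℕ) :
    (Finset.univ.filter fun j : Fin n => (j : ℕ) + d = a).card ≤ 1 :=
  Finset.card_le_one.2 fun x hx y hy => Fin.ext <| by simp only [Finset.mem_filter] at hx hy; omega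

/-- Indices here are 0-based (paper index `i + 1`): `xiBlock k` is `B_k` and `xiBand k` is
`{2k-3, …, 2k+1}`; truncated subtraction performs the intersection with `I_Ξ` at the left end. -/
def xiBlock (k : ℕ) : Finset ℕ := Finset.Ico (2 * k - 3) (2 * k)

def xiBand (k : ℕ) : Finset ℕ := Finset.Icc (2 * k - 4) (2 * k)

noncomputable def wXiEndSum (m h L p : ℕ) (α : ℝ) (k i : ℕ) : ℝ :=
  wXi m h L p α k ((i : ℤ) + 1) (2 * k - 3) + wXi m h L p α k ((i : ℤ) + 1) (2 * k + 1)

section Entries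

variable {m h L p : ℕ} {α ε : ℝ}

lemma wXi_nonneg (hα : 0 ≤ α) (k : ℕ) (I J : ℤ) : 0 ≤ wXi m h L p α k I J := by
  unfold wXi; split_ifs <;> positivity

lemma wHatMat_nonneg (hα : 0 ≤ α) (hε : 0 ≤ ε) (k : ℕ) (i j : Fin (2 * m - 1)) :
    0 ≤ wHatMat m h L p α ε k i j :=
  add_nonneg (wXi_nonneg hα ..) (by split_ifs <;> first | exact hε | exact le_rfl)

lemma wHatMat_row_eq_one {k : ℕ} {i : Fin (2 * m - 1)} (hi : (i : ℕ) ∉ xiBlock k) :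
    wHatMat m h L p α ε k i = (1 : Matrix _ _ ℝ) i := by
  ext j
  simp only [xiBlock, Finset.mem_Ico, not_and_or, not_le, not_lt] at hi
  simp only [wHatMat, wXiHat, wXi, Matrix.one_apply, Fin.ext_iff]
  split_ifs <;> first | (exfalso; omega) | simp

lemma wXi_eq_zero_of_ne (k : ℕ) {I J : ℤ}
    (hI : 2 * (k : ℤ) - 2 ≤ I ∧ I ≤ 2 * (k : ℤ) ∧ 1 ≤ I ∧ I ≤ 2 * (m : ℤ) - 1)
    (hJ : J ≠ 2 * k - 3 ∧ J ≠ 2 * k + 1) : wXi m h L p α k I J = 0 := by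
  unfold wXi; split_ifs <;> first | rfl | omega

lemma wHatMat_apply_of_mem_block {k : ℕ} {i : Fin (2 * m - 1)} (hi : (i : ℕ) ∈ xiBlock k)
    (j : Fin (2 * m - 1)) :
    wHatMat m h L p α ε k i j =
      (if (j : ℕ) + 4 = 2 * k then wXi m h L p α k ((i : ℤ) + 1) (2 * k - 3) + ε else 0) +
      (if (j : ℕ) = 2 * k then wXi m h L p α k ((i : ℤ) + 1) (2 * k + 1) + ε else 0) +
      (if (j : ℕ) ∈ xiBlock k then ε else 0) := by
  have := i.isLt
  simp only [xiBlock, Finset.mem_Ico] at hi ⊢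
  unfold wHatMat wXiHat
  split_ifs <;> first
    | (exfalso; omega)
    | (rw [show ((j : ℕ) : ℤ) + 1 = 2 * k - 3 by omega]; ring)
    | (rw [show ((j : ℕ) : ℤ) + 1 = 2 * k + 1 by omega]; ring)
    | (rw [wXi_eq_zero_of_ne k (by omega) (by omega)]; ring)

lemma wHatMat_eq_zero_of_not_mem_band {k : ℕ} {i j : Fin (2 * m - 1)} (hi : (i : ℕ) ∈ xiBlock k)
    (hj : (j : ℕ) ∉ xiBand k) : wHatMat m h L p α ε k i j = 0 := by
  simp only [xiBand, Finset.mem_Icc] at hj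
  rw [wHatMat_apply_of_mem_block hi, if_neg (by omega), if_neg (by omega),
    if_neg (by simp only [xiBlock, Finset.mem_Ico]; omega)]
  ring

lemma wXiEndSum_le {k : ℕ} {i : Fin (2 * m - 1)} (hi : (i : ℕ) ∈ xiBlock k) :
    wXiEndSum m h L p α k i ≤
      max (α ^ (1 / h) + α ^ ((L - p + 1) / h)) (2 * α ^ ((p + 1) / h)) := by
  have := i.isLt
  simp only [xiBlock, Finset.mem_Ico] at hi
  have := le_max_left (α ^ (1 / h) + α ^ ((L - p + 1) / h)) (2 * α ^ ((p + 1) / h))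
  have := le_max_right (α ^ (1 / h) + α ^ ((L - p + 1) / h)) (2 * α ^ ((p + 1) / h))
  unfold wXiEndSum wXi
  split_ifs <;> first | (exfalso; omega) | linarith

lemma wXiEndSum_of_middle {k : ℕ} {i : Fin (2 * m - 1)} (hi : (i : ℕ) + 2 = 2 * k) :
    wXiEndSum m h L p α k i = 2 * α ^ ((p + 1) / h) := by
  have := i.isLt
  unfold wXiEndSum wXi
  split_ifs <;> first | (exfalso; omega) | ring

lemma sum_wHatMat_mul_le {k : ℕ} {i : Fin (2 * m - 1)} (hi : (i : ℕ) ∈ xiBlock k)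
    (hα : 0 ≤ α) (hε : 0 ≤ ε) {r : Fin (2 * m - 1) → ℝ} {ρ R : ℝ} (hρ : 0 ≤ ρ) (hR : 0 ≤ R)
    (hrρ : ∀ j : Fin (2 * m - 1), (j : ℕ) + 4 = 2 * k ∨ (j : ℕ) = 2 * k → r j ≤ ρ)
    (hrR : ∀ j : Fin (2 * m - 1), (j : ℕ) ∈ xiBlock k → r j ≤ R) :
    ∑ j, wHatMat m h L p α ε k i j * r j ≤
      (wXiEndSum m h L p α k i + 2 * ε) * ρ + 3 * (ε * R) := by
  simp only [wHatMat_apply_of_mem_block hi, add_mul, Finset.sum_add_distrib, wXiEndSum]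
  have hwl : 0 ≤ wXi m h L p α k ((i : ℤ) + 1) (2 * k - 3) + ε :=
    add_nonneg (wXi_nonneg hα ..) hε
  have hwr : 0 ≤ wXi m h L p α k ((i : ℤ) + 1) (2 * k + 1) + ε :=
    add_nonneg (wXi_nonneg hα ..) hε
  have hleft := sum_ite_mul_le _ (Fin.card_filter_val_add_eq_le_one 4 (2 * k)) hwl hρ
    fun j hj => hrρ j (Or.inl hj)
  have hright := sum_ite_mul_le (fun j : Fin (2 * m - 1) => (j : ℕ) = 2 * k)
    (by simpa using Fin.card_filter_val_add_eq_le_one (n := 2 * m - 1) 0 (2 * k)) hwr hρ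
    fun j hj => hrρ j (Or.inr hj)
  have hmid := sum_ite_mul_le (N := 3) _ ((Fin.card_filter_val_mem_le (xiBlock k)).trans
    (by simp [xiBlock]; omega)) hε hR hrR
  push_cast at hleft hright hmid
  linarith

lemma rowAbsSum_wHatMat_le {k : ℕ} {i : Fin (2 * m - 1)} (hi : (i : ℕ) ∈ xiBlock k)
    (hα : 0 ≤ α) (hε : 0 ≤ ε) :
    rowAbsSum (wHatMat m h L p α ε k) i ≤ wXiEndSum m h L p α k i + 5 * ε := by
  have := sum_wHatMat_mul_le (h := h) (L := L) (p := p) (r := 1) hi hα hε zero_le_one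
    zero_le_one (fun _ _ => le_rfl) (fun _ _ => le_rfl)
  simp only [rowAbsSum, abs_of_nonneg (wHatMat_nonneg hα hε ..)]
  simp only [Pi.one_apply, mul_one] at this
  linarith

end Entries

lemma mem_descList {m k : ℕ} : k ∈ descList m ↔ 1 ≤ k ∧ k ≤ m := by
  simp only [descList, List.mem_map, List.mem_range]
  constructor
  · rintro ⟨i, hi, rfl⟩; omega
  · intro hk; exact ⟨m - k, by omega, by omega⟩

lemma nodup_descList (m : ℕ) : (descList m).Nodup :=
  List.nodup_range.map_on fun x hx y hy hxy => by
    simp only [List.mem_range] at hx hy; omega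

lemma mem_filter_descList {m k r : ℕ} :
    k ∈ (descList m).filter (fun k => k % 2 = r) ↔ k % 2 = r ∧ 1 ≤ k ∧ k ≤ m := by
  rw [List.mem_filter, mem_descList, decide_eq_true_iff, and_comm]

noncomputable def sweepProd (m h L p : ℕ) (α ε : ℝ) (r : ℕ) :
    Matrix (Fin (2 * m - 1)) (Fin (2 * m - 1)) ℝ :=
  (((descList m).filter fun k => k % 2 = r).map (wHatMat m h L p α ε)).prod

section Sweep

variable {m h L p : ℕ} {α ε : ℝ}

lemma sweepProd_row_eq_one {r : ℕ} {i : Fin (2 * m - 1)}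
    (hi : ∀ k, k % 2 = r → 1 ≤ k → k ≤ m → (i : ℕ) ∉ xiBlock k) :
    sweepProd m h L p α ε r i = (1 : Matrix _ _ ℝ) i :=
  Matrix.list_prod_map_row_eq_one (S := fun k => {i : Fin (2 * m - 1) | (i : ℕ) ∈ xiBlock k})
    (fun _ _ hi => wHatMat_row_eq_one hi) fun k hk =>
      let ⟨hkr, hk1, hkm⟩ := mem_filter_descList.1 hk; hi k hkr hk1 hkm

lemma sweepProd_row_eq {r k : ℕ} (hkr : k % 2 = r) (hk1 : 1 ≤ k) (hkm : k ≤ m)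
    {i : Fin (2 * m - 1)} (hi : (i : ℕ) ∈ xiBlock k) :
    sweepProd m h L p α ε r i = wHatMat m h L p α ε k i := by
  refine Matrix.list_prod_map_row_eq (S := fun k => {i : Fin (2 * m - 1) | (i : ℕ) ∈ xiBlock k})
    (T := fun k => {c : Fin (2 * m - 1) | (c : ℕ) ∈ xiBand k}) (fun _ _ hi => wHatMat_row_eq_one hi)
    (fun _ _ _ hi hc => not_not.1 fun hc' => hc (wHatMat_eq_zero_of_not_mem_band hi hc'))
    (fun k c hc => ?_) (((nodup_descList m).filter _).pairwise_of_forall_ne ?_)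
    (mem_filter_descList.2 ⟨hkr, hk1, hkm⟩) hi
  · simp only [Set.mem_ofPred_eq, xiBlock, xiBand, Finset.mem_Ico, Finset.mem_Icc] at hc ⊢
    omega
  · intro a ha b hb hab
    rw [mem_filter_descList] at ha hb
    constructor <;> refine Set.disjoint_left.2 fun c hca hcb => ?_ <;>
      simp only [Set.mem_ofPred_eq, xiBlock, xiBand, Finset.mem_Ico, Finset.mem_Icc] at hca hcb <;>
      omega

lemma rowAbsSum_sweepProd_eq {r k : ℕ} (hkr : k % 2 = r) (hk1 : 1 ≤ k) (hkm : k ≤ m)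
    {i : Fin (2 * m - 1)} (hi : (i : ℕ) ∈ xiBlock k) :
    rowAbsSum (sweepProd m h L p α ε r) i = rowAbsSum (wHatMat m h L p α ε k) i := by
  rw [rowAbsSum, sweepProd_row_eq hkr hk1 hkm hi, rowAbsSum]

lemma rowAbsSum_sweepProd_le (hα : 0 ≤ α) (hε : 0 ≤ ε) (hlam : 2 * α ^ ((p + 1) / h) ≤ 1)
    (r : ℕ) (i : Fin (2 * m - 1)) :
    rowAbsSum (sweepProd m h L p α ε r) i ≤
      max (α ^ (1 / h) + α ^ ((L - p + 1) / h)) 1 + 5 * ε := by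
  by_cases hi : ∃ k, k % 2 = r ∧ 1 ≤ k ∧ k ≤ m ∧ (i : ℕ) ∈ xiBlock k
  · obtain ⟨k, hkr, hk1, hkm, hik⟩ := hi
    rw [rowAbsSum_sweepProd_eq hkr hk1 hkm hik]
    have := rowAbsSum_wHatMat_le (h := h) (L := L) (p := p) hik hα hε
    have := (wXiEndSum_le (h := h) (L := L) (p := p) (α := α) hik).trans
      (max_le_max le_rfl hlam)
    linarith
  · push Not at hi
    rw [rowAbsSum_eq_one_of_row_eq_one (sweepProd_row_eq_one hi)]
    linarith [le_max_right (α ^ (1 / h) + α ^ ((L - p + 1) / h)) 1]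

lemma rowAbsSum_sweepProd_le_of_middle (hα : 0 ≤ α) (hε : 0 ≤ ε) {r k : ℕ} (hkr : k % 2 = r)
    (hk1 : 1 ≤ k) (hkm : k ≤ m) {i : Fin (2 * m - 1)} (hi : (i : ℕ) + 2 = 2 * k) :
    rowAbsSum (sweepProd m h L p α ε r) i ≤ 2 * α ^ ((p + 1) / h) + 5 * ε := by
  have hik : (i : ℕ) ∈ xiBlock k := by simp only [xiBlock, Finset.mem_Ico]; omega
  rw [rowAbsSum_sweepProd_eq hkr hk1 hkm hik, ← wXiEndSum_of_middle (L := L) (α := α) hi]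
  exact rowAbsSum_wHatMat_le hik hα hε

lemma rowAbsSum_sweepProd_mul_le_of_mem_block (hα : 0 ≤ α) (hε : 0 ≤ ε)
    (hlam : 2 * α ^ ((p + 1) / h) ≤ 1) {k : ℕ} (hk : k % 2 = 0) (hk1 : 1 ≤ k) (hkm : k ≤ m)
    {i : Fin (2 * m - 1)} (hi : (i : ℕ) ∈ xiBlock k) :
    rowAbsSum (sweepProd m h L p α ε 0 * sweepProd m h L p α ε 1) i ≤
      (2 * α ^ ((p + 1) / h)) * max (α ^ (1 / h) + α ^ ((L - p + 1) / h)) 1 +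
        ε * (2 * (2 * α ^ ((p + 1) / h)) + 25 * ε +
          8 * max (α ^ (1 / h) + α ^ ((L - p + 1) / h)) 1) := by
  set M := max (α ^ (1 / h) + α ^ ((L - p + 1) / h)) 1
  set lam := 2 * α ^ ((p + 1) / h)
  have hM : 1 ≤ M := le_max_right _ _
  have hlam0 : 0 ≤ lam := by positivity
  have hends := (wXiEndSum_le (h := h) (L := L) (p := p) (α := α) hi).trans
    (max_le_max le_rfl hlam)
  have hsum : rowAbsSum (sweepProd m h L p α ε 0 * sweepProd m h L p α ε 1) i ≤
      (wXiEndSum m h L p α k i + 2 * ε) * (lam + 5 * ε) + 3 * (ε * (M + 5 * ε)) := by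
    refine (rowAbsSum_mul_le _ _ i).trans ?_
    rw [sweepProd_row_eq (Nat.zero_mod 2 ▸ hk) hk1 hkm hi]
    simp only [abs_of_nonneg (wHatMat_nonneg hα hε ..)]
    have := i.isLt
    refine sum_wHatMat_mul_le hi hα hε (by positivity) (by positivity) ?_
      (fun j _ => rowAbsSum_sweepProd_le hα hε hlam 1 j)
    rintro j (hj | hj)
    · exact rowAbsSum_sweepProd_le_of_middle hα hε (k := k - 1) (by omega) (by omega) (by omega)
        (by omega)
    · exact rowAbsSum_sweepProd_le_of_middle hα hε (k := k + 1) (by omega) (by omega) (by omega)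
        (by omega)
  nlinarith [mul_le_mul_of_nonneg_right hends (by positivity : 0 ≤ lam + 5 * ε)]

end Sweep

theorem stmt4_general (m h L p : ℕ) (α ε : ℝ) (hα0 : 0 ≤ α) (hε0 : 0 ≤ ε)
    (hlam : 2 * α ^ ((p + 1) / h) < 1) :
    rowNorm
      (((((descList m).filter fun k => k % 2 = 0).map (wHatMat m h L p α ε)).prod) *
        ((((descList m).filter fun k => k % 2 = 1).map (wHatMat m h L p α ε)).prod)) ≤
      (2 * α ^ ((p + 1) / h)) * max (α ^ (1 / h) + α ^ ((L - p + 1) / h)) 1 +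
        ε * (2 * (2 * α ^ ((p + 1) / h)) + 25 * ε +
          8 * max (α ^ (1 / h) + α ^ ((L - p + 1) / h)) 1) := by
  have hM : 1 ≤ max (α ^ (1 / h) + α ^ ((L - p + 1) / h)) 1 := le_max_right _ _
  refine Real.iSup_le (fun i => ?_) (by positivity)
  change rowAbsSum (sweepProd m h L p α ε 0 * sweepProd m h L p α ε 1) i ≤ _
  by_cases hi : ∃ k, k % 2 = 0 ∧ 1 ≤ k ∧ k ≤ m ∧ (i : ℕ) ∈ xiBlock k
  · obtain ⟨k, hk, hk1, hkm, hik⟩ := hi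
    exact rowAbsSum_sweepProd_mul_le_of_mem_block hα0 hε0 hlam.le hk hk1 hkm hik
  push Not at hi
  have := i.isLt
  have hi4 : (i : ℕ) % 4 = 0 := by
    by_contra hi4
    have := hi (2 * (i / 4) + 2) (by omega) (by omega) (by omega)
    simp only [xiBlock, Finset.mem_Ico] at this
    omega
  have hmid := rowAbsSum_sweepProd_le_of_middle (h := h) (L := L) (p := p) hα0 hε0 (r := 1)
    (k := i / 2 + 1) (i := i) (by omega) (by omega) (by omega) (by omega)
  rw [rowAbsSum, Matrix.mul_row_eq_of_row_eq_one (sweepProd_row_eq_one hi), ← rowAbsSum]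
  nlinarith [pow_nonneg hα0 ((p + 1) / h)]

theorem stmt4 (m h L p : ℕ) (hm : 3 ≤ m) (hmodd : m % 2 = 1) (hh : 1 ≤ h) (hpL : p < L)
    (α ε : ℝ) (hα0 : 0 ≤ α) (hα1 : α < 1) (hε0 : 0 ≤ ε) (hε1 : ε < 1)
    (hlam : 2 * α ^ ((p + 1) / h) < 1) :
    rowNorm
      (((((descList m).filter fun k => k % 2 = 0).map (wHatMat m h L p α ε)).prod) *
        ((((descList m).filter fun k => k % 2 = 1).map (wHatMat m h L p α ε)).prod)) ≤
      (2 * α ^ ((p + 1) / h)) * max (α ^ (1 / h) + α ^ ((L - p + 1) / h)) 1 +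
        ε * (2 * (2 * α ^ ((p + 1) / h)) + 25 * ε +
          8 * max (α ^ (1 / h) + α ^ ((L - p + 1) / h)) 1) :=
  stmt4_general m h L p α ε hα0 hε0 hlam
end
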